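/- Let G be a finite nilpotent group. Then the lattice of normal subgroups of G splits strongly if and only if there exist a prime p and a Sylow p-subgroup P of G such that the lattice of normal subgroups of P splits strongly. -/
import Mathlib


/-- A bounded poset `L` *splits strongly* if there are `δ, ε ∈ L` with
`⊥ < ε ≤ δ < ⊤` such that every `α ∈ L` satisfies `α ≤ δ` or `ε ≤ α`. -/
def SplitsStrongly (L : Type*) [PartialOrder L] [BoundedOrder L] : Prop :=
  ∃ δ ε : L, ⊥ < ε ∧ ε ≤ δ ∧ δ < ⊤ ∧ ∀ α : L, α ≤ δ ∨ ε ≤ α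

/-- The normal subgroups of a group, ordered by inclusion, form a bounded order
(in fact a bounded lattice). -/
instance normalSubgroupBoundedOrder (G : Type*) [Group G] :
    BoundedOrder {N : Subgroup G // N.Normal} where
  top := ⟨⊤, inferInstance⟩
  le_top N := (le_top : N.1 ≤ ⊤)
  bot := ⟨⊥, inferInstance⟩
  bot_le N := (bot_le : ⊥ ≤ N.1)

open Subgroup

section Aux

variable {G : Type*} [Group G]

/-- auxiliary gcd computation -/
private lemma aux_gcd {u v k : ℕ} (hv : v ≠ 0) (hk1 : k ≡ 1 [MOD u])
    (hk0 : k ≡ 0 [MOD v]) : Nat.gcd (u * v) k = v := by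
  have hvk : v ∣ k := (Nat.modEq_zero_iff_dvd).mp hk0
  obtain ⟨k', rfl⟩ := hvk
  have huk : Nat.Coprime u (v * k') := by
    have : Nat.gcd u (v * k') = Nat.gcd u 1 := by
      unfold Nat.ModEq at hk1
      rw [Nat.gcd_rec u (v * k'), Nat.gcd_rec u 1, hk1]
    simpa [Nat.Coprime] using this
  have huk' : Nat.Coprime u k' := huk.coprime_dvd_right ⟨v, by ring⟩
  calc Nat.gcd (u * v) (v * k') = Nat.gcd (v * u) (v * k') := by rw [Nat.mul_comm]
    _ = v * Nat.gcd u k' := Nat.gcd_mul_left v u k'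
    _ = v := by rw [huk', Nat.mul_one]

/-- Primary splitting of an element of a finite group: if the order of `g` is
`u * v` with `u, v` coprime, then `g = x * y` with `x, y` powers of `g` of
orders `u` and `v` respectively. -/
lemma exists_primary_split [Finite G] (g : G) {u v : ℕ} (h : orderOf g = u * v)
    (huv : Nat.Coprime u v) :
    ∃ x ∈ zpowers g, ∃ y ∈ zpowers g, g = x * y ∧ orderOf x = u ∧ orderOf y = v := by
  have hg : 0 < orderOf g := orderOf_pos g
  have hu : u ≠ 0 := by rintro rfl; rw [h] at hg; simp at hg
  have hv : v ≠ 0 := by rintro rfl; rw [h] at hg; simp at hg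
  obtain ⟨k, hk1, hk0⟩ := Nat.chineseRemainder huv 1 0
  obtain ⟨l, hl0, hl1⟩ := Nat.chineseRemainder huv 0 1
  refine ⟨g ^ k, ⟨(k : ℤ), zpow_natCast g k⟩, g ^ l, ⟨(l : ℤ), zpow_natCast g l⟩,
    ?_, ?_, ?_⟩
  · have hmod : k + l ≡ 1 [MOD u * v] := by
      refine (Nat.modEq_and_modEq_iff_modEq_mul huv).mp ⟨?_, ?_⟩
      · simpa using hk1.add hl0
      · simpa using hk0.add hl1
    have : g ^ (k + l) = g ^ 1 := pow_eq_pow_iff_modEq.mpr (by rwa [h])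
    rw [pow_add] at this
    rw [this, pow_one]
  · rw [orderOf_pow, h, aux_gcd hv hk1 hk0, Nat.mul_div_cancel _ (Nat.pos_of_ne_zero hv)]
  · have hgcd : Nat.gcd (u * v) l = u := by
      rw [Nat.mul_comm]; exact aux_gcd hu hl1 hl0
    rw [orderOf_pow, h, hgcd, Nat.mul_div_cancel_left _ (Nat.pos_of_ne_zero hu)]

end Aux

section Nilp

variable {G : Type*} [Group G] [Fintype G]

/-- Any `q`-element lies in a normal Sylow `q`-subgroup. -/
lemma mem_sylow_of_orderOf_pow {q : ℕ} [Fact q.Prime] (Q : Sylow q G)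
    (hQ : (Q : Subgroup G).Normal) {x : G} (hx : ∃ k, orderOf x = q ^ k) :
    x ∈ (Q : Subgroup G) := by
  obtain ⟨k, hk⟩ := hx
  have hpg : IsPGroup q (zpowers x) := IsPGroup.iff_card.mpr ⟨k, by rw [Nat.card_zpowers, hk]⟩
  obtain ⟨R, hR⟩ := hpg.exists_le_sylow
  haveI := Sylow.unique_of_normal Q hQ
  have hRQ : R = Q := Subsingleton.elim R Q
  exact hRQ ▸ hR (mem_zpowers x)

/-- A subgroup containing a Sylow subgroup for each prime is the whole group. -/
lemma eq_top_of_sylows_le {H : Subgroup G}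
    (h : ∀ (r : ℕ), r.Prime → ∃ Q : Sylow r G, (Q : Subgroup G) ≤ H) : H = ⊤ := by
  have h0 : Nat.card G ≠ 0 := Nat.card_pos.ne'
  have hH0 : Nat.card H ≠ 0 := Nat.card_pos.ne'
  apply Subgroup.eq_top_of_card_eq
  refine Nat.dvd_antisymm (Subgroup.card_subgroup_dvd_card H) ?_
  rw [← Nat.factorization_le_iff_dvd h0 hH0]
  intro r
  by_cases hr : r.Prime
  · haveI := Fact.mk hr
    obtain ⟨Q, hQ⟩ := h r hr
    rw [← Nat.Prime.pow_dvd_iff_le_factorization hr hH0]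
    calc r ^ (Nat.card G).factorization r = Nat.card Q := Q.card_eq_multiplicity.symm
      _ ∣ Nat.card H := Subgroup.card_dvd_of_le hQ
  · simp [Nat.factorization_eq_zero_of_not_prime _ hr]

variable (hn : ∀ (r : ℕ), r.Prime → ∀ Q : Sylow r G, (Q : Subgroup G).Normal)

include hn

/-- In a finite group with all Sylows normal, a Sylow subgroup together with its
centralizer generates the whole group. -/
lemma sylow_sup_centralizer {p : ℕ} [hp : Fact p.Prime] (P : Sylow p G) :
    (P : Subgroup G) ⊔ Subgroup.centralizer ((P : Subgroup G) : Set G) = ⊤ := by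
  apply eq_top_of_sylows_le
  intro r hr
  haveI := Fact.mk hr
  by_cases hrp : r = p
  · subst hrp; exact ⟨P, le_sup_left⟩
  · refine ⟨default, le_trans ?_ le_sup_right⟩
    intro y hy
    rw [Subgroup.mem_centralizer_iff]
    intro x hx
    exact Subgroup.commute_of_normal_of_disjoint _ _ (hn p hp.out P)
      (hn r hr default)
      (IsPGroup.disjoint_of_ne p r (Ne.symm hrp) _ _ P.isPGroup'
        (default : Sylow r G).isPGroup') x y hx hy

/-- In a finite group with all Sylows normal, a normal subgroup of a Sylow subgroup
is normal in the whole group. -/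
lemma map_sylow_normal {p : ℕ} [hp : Fact p.Prime] (P : Sylow p G)
    (N : Subgroup (P : Subgroup G)) (hN : N.Normal) :
    (N.map (P : Subgroup G).subtype).Normal := by
  haveI := hn p hp.out P
  constructor
  intro n hnm g
  obtain ⟨m, hm, rfl⟩ := hnm
  have hg : g ∈ ((P : Subgroup G) ⊔ Subgroup.centralizer ((P : Subgroup G) : Set G) : Subgroup G) := by
    rw [sylow_sup_centralizer hn P]; trivial
  rw [← SetLike.mem_coe, Subgroup.normal_mul] at hg
  obtain ⟨x, hx, c, hc, rfl⟩ := hg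
  have hcm : c * (m : G) * c⁻¹ = (m : G) := by
    have := Subgroup.mem_centralizer_iff.mp hc (m : G) m.2
    rw [← this]; group
  have key : (x * c) * (m : G) * (x * c)⁻¹ = x * (m : G) * x⁻¹ := by
    rw [mul_inv_rev]
    calc x * c * ↑m * (c⁻¹ * x⁻¹) = x * (c * ↑m * c⁻¹) * x⁻¹ := by group
      _ = x * ↑m * x⁻¹ := by rw [hcm]
  show (x * c) * (m : G) * (x * c)⁻¹ ∈ N.map (P : Subgroup G).subtype
  rw [key]
  refine ⟨⟨x, hx⟩ * m * ⟨x, hx⟩⁻¹, hN.conj_mem m hm ⟨x, hx⟩, rfl⟩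

/-- The product of the Sylow subgroups away from `p`. -/
noncomputable def sylK (p : ℕ) : Subgroup G :=
  ⨆ r ∈ (Nat.card G).primeFactors.erase p, ((default : Sylow r G) : Subgroup G)

omit hn in
lemma card_sup_dvd (A B : Subgroup G) (hB : B.Normal) :
    Nat.card ↥(A ⊔ B) ∣ Nat.card A * Nat.card B := by
  haveI := hB
  have e := QuotientGroup.quotientInfEquivProdNormalQuotient A B
  have h1 : Nat.card ↥(A ⊔ B) =
      Nat.card (↥(A ⊔ B) ⧸ B.subgroupOf (A ⊔ B)) * Nat.card (B.subgroupOf (A ⊔ B)) :=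
    Subgroup.card_eq_card_quotient_mul_card_subgroup _
  have h2 : Nat.card (↥(A ⊔ B) ⧸ B.subgroupOf (A ⊔ B)) ∣ Nat.card A := by
    have := Nat.card_congr e.toEquiv
    rw [← this]
    exact Dvd.intro _ (Subgroup.card_eq_card_quotient_mul_card_subgroup
      (B.subgroupOf A)).symm
  have h3 : Nat.card (B.subgroupOf (A ⊔ B)) ∣ Nat.card B := by
    have hc : Nat.card (B.subgroupOf (A ⊔ B)) =
        Nat.card ((B.subgroupOf (A ⊔ B)).map (A ⊔ B).subtype) :=
      Nat.card_congr (Subgroup.equivMapOfInjective _ _ (A ⊔ B).subtype_injective).toEquiv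
    rw [hc, Subgroup.subgroupOf_map_subtype]
    exact Subgroup.card_dvd_of_le inf_le_left
  rw [h1]
  exact mul_dvd_mul h2 h3

lemma sylK_normal (p : ℕ) : (sylK (G := G) p).Normal := by
  constructor
  intro n hnm g
  unfold sylK at hnm ⊢
  refine Subgroup.iSup_induction
    (fun r => ⨆ (_ : r ∈ (Nat.card G).primeFactors.erase p),
      ((default : Sylow r G) : Subgroup G))
    (C := fun x => g * x * g⁻¹ ∈ ⨆ r ∈ (Nat.card G).primeFactors.erase p,
      ((default : Sylow r G) : Subgroup G)) hnm ?_ ?_ ?_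
  · intro i x hx
    replace hx : x ∈ ⨆ (_ : i ∈ (Nat.card G).primeFactors.erase p),
        ((default : Sylow i G) : Subgroup G) := hx
    by_cases hi : i ∈ (Nat.card G).primeFactors.erase p
    · rw [iSup_pos hi] at hx
      have hipr : i.Prime := Nat.prime_of_mem_primeFactors (Finset.mem_erase.mp hi).2
      have hconj : g * x * g⁻¹ ∈ ((default : Sylow i G) : Subgroup G) :=
        (hn i hipr default).conj_mem x hx g
      exact le_iSup₂ (f := fun r (_ : r ∈ (Nat.card G).primeFactors.erase p) =>
        ((default : Sylow r G) : Subgroup G)) i hi hconj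
    · rw [iSup_neg hi] at hx
      rw [Subgroup.mem_bot.mp hx]
      simpa using Subgroup.one_mem _
  · simpa using Subgroup.one_mem _
  · intro x y hx hy
    have : g * (x * y) * g⁻¹ = (g * x * g⁻¹) * (g * y * g⁻¹) := by group
    rw [this]
    exact Subgroup.mul_mem _ hx hy

lemma not_dvd_card_sylK {p : ℕ} (hp : p.Prime) : ¬ p ∣ Nat.card (sylK (G := G) p) := by
  have key : ∀ (t : Finset ℕ), (∀ r ∈ t, r.Prime ∧ r ≠ p) →
      ¬ p ∣ Nat.card ↥(⨆ r ∈ t, ((default : Sylow r G) : Subgroup G)) := by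
    intro t
    classical
    induction t using Finset.induction_on with
    | empty => simpa using hp.not_dvd_one
    | @insert a t ha ih =>
      intro ht
      obtain ⟨hap, hane⟩ := ht a (Finset.mem_insert_self a t)
      haveI := Fact.mk hap
      have ht' : ∀ r ∈ t, r.Prime ∧ r ≠ p := fun r hr => ht r (Finset.mem_insert_of_mem hr)
      rw [Finset.iSup_insert]
      intro hdvd
      have hdvd2 : p ∣ Nat.card ↥(⨆ r ∈ t, ((default : Sylow r G) : Subgroup G)) *
          Nat.card ((default : Sylow a G) : Subgroup G) := by
        refine hdvd.trans ?_
        rw [sup_comm]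
        exact card_sup_dvd _ _ (hn a hap default)
      rcases hp.dvd_mul.mp hdvd2 with h | h
      · exact ih ht' h
      · have hc : Nat.card ((default : Sylow a G) : Subgroup G) =
            a ^ (Nat.card G).factorization a := (default : Sylow a G).card_eq_multiplicity
        rw [hc] at h
        exact hane ((Nat.prime_dvd_prime_iff_eq hp hap).mp (hp.dvd_of_dvd_pow h)).symm
  unfold sylK
  apply key
  intro r hr
  obtain ⟨hne, hmem⟩ := Finset.mem_erase.mp hr
  exact ⟨Nat.prime_of_mem_primeFactors hmem, hne⟩

lemma mem_sylK_of_not_dvd_orderOf {p : ℕ} (hp : p.Prime) (g : G)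
    (hg : ¬ p ∣ orderOf g) : g ∈ sylK (G := G) p := by
  suffices H : ∀ n : ℕ, ∀ g : G, orderOf g = n → ¬ p ∣ n → g ∈ sylK (G := G) p by
    exact H _ g rfl (by rwa [])
  intro n
  induction n using Nat.strong_induction_on with
  | _ n ih =>
    intro g hgo hpn
    rcases eq_or_ne n 1 with h1 | h1
    · have hg1 : g = 1 := orderOf_eq_one_iff.mp (by rw [hgo, h1])
      rw [hg1]; exact Subgroup.one_mem _
    · have hn0 : n ≠ 0 := by rw [← hgo]; exact (orderOf_pos g).ne'
      obtain ⟨r, hr, hrn⟩ := Nat.exists_prime_and_dvd h1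
      have hrp : r ≠ p := fun h => hpn (h ▸ hrn)
      haveI := Fact.mk hr
      have hord : orderOf g = r ^ n.factorization r * (n / r ^ n.factorization r) := by
        rw [hgo, Nat.ordProj_mul_ordCompl_eq_self]
      have hcop : Nat.Coprime (r ^ n.factorization r) (n / r ^ n.factorization r) :=
        Nat.Coprime.pow_left _ (Nat.coprime_ordCompl hr hn0)
      obtain ⟨x, hxz, y, hyz, hxy, hox, hoy⟩ := exists_primary_split g hord hcop
      have hrs : r ∈ (Nat.card G).primeFactors.erase p :=
        Finset.mem_erase.mpr ⟨hrp, Nat.mem_primeFactors.mpr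
          ⟨hr, hrn.trans (hgo ▸ orderOf_dvd_natCard g), Nat.card_pos.ne'⟩⟩
      have hxK : x ∈ sylK (G := G) p := by
        have hxQ : x ∈ ((default : Sylow r G) : Subgroup G) :=
          mem_sylow_of_orderOf_pow default (hn r hr default) ⟨_, hox⟩
        exact le_iSup₂ (f := fun r (_ : r ∈ (Nat.card G).primeFactors.erase p) =>
          ((default : Sylow r G) : Subgroup G)) r hrs hxQ
      have hyK : y ∈ sylK (G := G) p := by
        have hk1 : 1 < r ^ n.factorization r :=
          Nat.one_lt_pow (hr.factorization_pos_of_dvd hn0 hrn).ne' hr.one_lt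
        have hlt : n / r ^ n.factorization r < n :=
          Nat.div_lt_self (Nat.pos_of_ne_zero hn0) hk1
        exact ih _ hlt y hoy (fun hd => hpn (hd.trans (Nat.ordCompl_dvd n r)))
      rw [hxy]; exact Subgroup.mul_mem _ hxK hyK

end Nilp

/-- The lattice of normal subgroups of a finite nilpotent group `G` splits strongly
iff for some prime `p`, the lattice of normal subgroups of a Sylow `p`-subgroup of
`G` splits strongly. -/
theorem nilpotent_normal_lattice_splitsStrongly_iff {G : Type*} [Group G] [Fintype G]
    (hG : Group.IsNilpotent G) :
    SplitsStrongly {N : Subgroup G // N.Normal} ↔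
      ∃ (p : ℕ), p.Prime ∧ ∃ P : Sylow p G,
        SplitsStrongly {N : Subgroup (P : Subgroup G) // N.Normal} := by
  have hn : ∀ (r : ℕ), r.Prime → ∀ Q : Sylow r G, (Q : Subgroup G).Normal := by
    have h := ((isNilpotent_of_finite_tfae (G := G)).out 0 3).mp hG
    exact fun r hr Q => h r (Fact.mk hr) Q
  constructor
  · rintro ⟨δ, ε, hbe, hed, hdt, hsplit⟩
    have hbot : ((⊥ : {N : Subgroup G // N.Normal}) : Subgroup G) = ⊥ := rfl
    have htop : ((⊤ : {N : Subgroup G // N.Normal}) : Subgroup G) = ⊤ := rfl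
    have hεbot : (ε : Subgroup G) ≠ ⊥ := fun h => hbe.ne (Subtype.ext (hbot.trans h.symm))
    have hδtop : (δ : Subgroup G) ≠ ⊤ := fun h => hdt.ne (Subtype.ext (h.trans htop.symm))
    have hcard : 1 < Nat.card (ε : Subgroup G) :=
      (Subgroup.one_lt_card_iff_ne_bot _).mpr hεbot
    obtain ⟨q, hq, hqdvd⟩ := Nat.exists_prime_and_dvd hcard.ne'
    haveI := Fact.mk hq
    haveI : Fintype ((ε : Subgroup G)) := Fintype.ofFinite _
    obtain ⟨g₀, hg₀⟩ := exists_prime_orderOf_dvd_card (G := (ε : Subgroup G)) q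
      (by rwa [← Nat.card_eq_fintype_card])
    set g : G := (g₀ : G) with hgdef
    have hgε : g ∈ (ε : Subgroup G) := g₀.2
    have hgord : orderOf g = q := by
      rw [← hg₀]
      exact orderOf_injective (ε : Subgroup G).subtype
        (ε : Subgroup G).subtype_injective g₀
    set P : Sylow q G := default with hPdef
    have hPn : (P : Subgroup G).Normal := hn q hq P
    haveI : (P : Subgroup G).Normal := hPn
    have hgP : g ∈ (P : Subgroup G) :=
      mem_sylow_of_orderOf_pow P hPn ⟨1, by rw [hgord, pow_one]⟩
    haveI hδn : (δ : Subgroup G).Normal := δ.2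
    haveI hεn : (ε : Subgroup G).Normal := ε.2
    refine ⟨q, hq, P,
      ⟨((δ : Subgroup G) ⊓ (P : Subgroup G)).subgroupOf (P : Subgroup G),
        Subgroup.Normal.subgroupOf inferInstance _⟩,
      ⟨((ε : Subgroup G) ⊓ (P : Subgroup G)).subgroupOf (P : Subgroup G),
        Subgroup.Normal.subgroupOf inferInstance _⟩, ?_, ?_, ?_, ?_⟩
    · rw [bot_lt_iff_ne_bot]
      intro h
      have heq : ((ε : Subgroup G) ⊓ (P : Subgroup G)).subgroupOf (P : Subgroup G) =
          ⊥ := congrArg Subtype.val h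
      have hmem : (⟨g, hgP⟩ : (P : Subgroup G)) ∈
          ((ε : Subgroup G) ⊓ (P : Subgroup G)).subgroupOf (P : Subgroup G) :=
        Subgroup.mem_subgroupOf.mpr ⟨hgε, hgP⟩
      rw [heq, Subgroup.mem_bot] at hmem
      have : g = 1 := congrArg Subtype.val hmem
      rw [this, orderOf_one] at hgord
      exact hq.one_lt.ne' hgord.symm
    · show ((ε : Subgroup G) ⊓ (P : Subgroup G)).subgroupOf (P : Subgroup G) ≤
        ((δ : Subgroup G) ⊓ (P : Subgroup G)).subgroupOf (P : Subgroup G)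
      exact Subgroup.comap_mono (inf_le_inf_right _ hed)
    · rw [lt_top_iff_ne_top]
      intro h
      have heq : ((δ : Subgroup G) ⊓ (P : Subgroup G)).subgroupOf (P : Subgroup G) =
          ⊤ := congrArg Subtype.val h
      have hPle : (P : Subgroup G) ≤ (δ : Subgroup G) :=
        le_trans (Subgroup.subgroupOf_eq_top.mp heq) inf_le_left
      apply hδtop
      apply eq_top_of_sylows_le
      intro r hr
      haveI := Fact.mk hr
      by_cases hrq : r = q
      · subst hrq; exact ⟨P, hPle⟩
      · refine ⟨default, ?_⟩
        rcases hsplit ⟨((default : Sylow r G) : Subgroup G), hn r hr default⟩ with h' | h'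
        · exact h'
        · exfalso
          have hgQ : g ∈ ((default : Sylow r G) : Subgroup G) := h' hgε
          set g₁ : ((default : Sylow r G) : Subgroup G) := ⟨g, hgQ⟩ with hg₁def
          have hgord₁ : orderOf g₁ = q := by
            rw [← hgord, ← orderOf_injective ((default : Sylow r G) : Subgroup G).subtype
              ((default : Sylow r G) : Subgroup G).subtype_injective g₁]
            rfl
          have hdvd : q ∣ r ^ (Nat.card G).factorization r := by
            rw [← (default : Sylow r G).card_eq_multiplicity, ← hgord₁]
            exact orderOf_dvd_natCard g₁
          exact hrq (((Nat.prime_dvd_prime_iff_eq hq hr).mp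
            (hq.dvd_of_dvd_pow hdvd)).symm)
    · intro α
      haveI hαn := α.2
      have hMn : ((α : Subgroup (P : Subgroup G)).map (P : Subgroup G).subtype).Normal :=
        map_sylow_normal hn P _ α.2
      rcases hsplit ⟨(α : Subgroup (P : Subgroup G)).map (P : Subgroup G).subtype, hMn⟩
        with h' | h'
      · left
        show (α : Subgroup (P : Subgroup G)) ≤
          ((δ : Subgroup G) ⊓ (P : Subgroup G)).subgroupOf (P : Subgroup G)
        intro x hx
        refine Subgroup.mem_subgroupOf.mpr ⟨h' ⟨x, hx, rfl⟩, x.2⟩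
      · right
        show ((ε : Subgroup G) ⊓ (P : Subgroup G)).subgroupOf (P : Subgroup G) ≤
          (α : Subgroup (P : Subgroup G))
        intro x hx
        have hxε : (x : G) ∈ (ε : Subgroup G) := (Subgroup.mem_subgroupOf.mp hx).1
        obtain ⟨y, hy, hyx⟩ := h' hxε
        have : y = x := Subtype.coe_injective hyx
        rwa [this] at hy
  · rintro ⟨p, hp, P, δ₀, ε₀, h1, h2, h3, h4⟩
    haveI := Fact.mk hp
    haveI hPnormal : (P : Subgroup G).Normal := hn p hp P
    have hbot : ((⊥ : {N : Subgroup (P : Subgroup G) // N.Normal}) :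
        Subgroup (P : Subgroup G)) = ⊥ := rfl
    have htop : ((⊤ : {N : Subgroup (P : Subgroup G) // N.Normal}) :
        Subgroup (P : Subgroup G)) = ⊤ := rfl
    have hε₀bot : (ε₀ : Subgroup (P : Subgroup G)) ≠ ⊥ :=
      fun h => h1.ne (Subtype.ext (hbot.trans h.symm))
    have hδ₀top : (δ₀ : Subgroup (P : Subgroup G)) ≠ ⊤ :=
      fun h => h3.ne (Subtype.ext (h.trans htop.symm))
    set D : Subgroup G := (δ₀ : Subgroup (P : Subgroup G)).map (P : Subgroup G).subtype with hDdef
    set E : Subgroup G := (ε₀ : Subgroup (P : Subgroup G)).map (P : Subgroup G).subtype with hEdef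
    have hD : D.Normal := map_sylow_normal hn P _ δ₀.2
    have hE : E.Normal := map_sylow_normal hn P _ ε₀.2
    set K : Subgroup G := sylK (G := G) p with hKdef
    have hK : K.Normal := sylK_normal hn p
    have hKcard : ¬ p ∣ Nat.card K := not_dvd_card_sylK hn hp
    haveI := hD; haveI := hK
    have hDK : (D ⊔ K).Normal := Subgroup.sup_normal D K
    have hDP : D ≤ (P : Subgroup G) := Subgroup.map_subtype_le _
    have hKP : K ⊓ (P : Subgroup G) = ⊥ := by
      apply inf_eq_bot_of_coprime
      have hc : Nat.card (P : Subgroup G) = p ^ (Nat.card G).factorization p :=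
        P.card_eq_multiplicity
      rw [hc]
      exact Nat.Coprime.pow_right _ ((Nat.Prime.coprime_iff_not_dvd hp).mpr hKcard).symm
    refine ⟨⟨D ⊔ K, hDK⟩, ⟨E, hE⟩, ?_, ?_, ?_, ?_⟩
    · rw [bot_lt_iff_ne_bot]
      intro h
      have heq : E = ⊥ := congrArg Subtype.val h
      rw [hEdef, Subgroup.map_eq_bot_iff, Subgroup.ker_subtype, le_bot_iff] at heq
      exact hε₀bot heq
    · show E ≤ D ⊔ K
      exact le_trans (Subgroup.map_subtype_le_map_subtype.mpr h2) le_sup_left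
    · rw [lt_top_iff_ne_top]
      intro h
      have hTop : D ⊔ K = ⊤ := congrArg Subtype.val h
      have hPD : (P : Subgroup G) ≤ D := by
        intro x hxP
        have hx : x ∈ D ⊔ K := hTop ▸ Subgroup.mem_top x
        rw [← SetLike.mem_coe, Subgroup.mul_normal] at hx
        obtain ⟨d, hd, k, hk, hdk⟩ := hx
        have hdk' : d * k = x := hdk
        have hdP : d ∈ (P : Subgroup G) := hDP hd
        have hkP : k ∈ (P : Subgroup G) := by
          have hkval : k = d⁻¹ * x := by rw [← hdk']; group
          rw [hkval]
          exact Subgroup.mul_mem _ (Subgroup.inv_mem _ hdP) hxP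
        have hkmem : k ∈ K ⊓ (P : Subgroup G) := ⟨hk, hkP⟩
        rw [hKP, Subgroup.mem_bot] at hkmem
        rw [← hdk', hkmem, mul_one]
        exact hd
      apply hδ₀top
      rw [eq_top_iff]
      intro m _
      have hmD : (m : G) ∈ D := hPD m.2
      obtain ⟨y, hy, hyx⟩ := hmD
      have : y = m := Subtype.coe_injective hyx
      rwa [this] at hy
    · intro N
      haveI hNn := N.2
      have hNPn : (((N : Subgroup G) ⊓ (P : Subgroup G)).subgroupOf
          (P : Subgroup G)).Normal := Subgroup.Normal.subgroupOf inferInstance _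
      rcases h4 ⟨((N : Subgroup G) ⊓ (P : Subgroup G)).subgroupOf (P : Subgroup G), hNPn⟩
        with h' | h'
      · left
        show (N : Subgroup G) ≤ D ⊔ K
        intro x hx
        have hx0 : orderOf x = p ^ (orderOf x).factorization p *
            (orderOf x / p ^ (orderOf x).factorization p) :=
          (Nat.ordProj_mul_ordCompl_eq_self (orderOf x) p).symm
        have hcop : Nat.Coprime (p ^ (orderOf x).factorization p)
            (orderOf x / p ^ (orderOf x).factorization p) :=
          Nat.Coprime.pow_left _ (Nat.coprime_ordCompl hp (orderOf_pos x).ne')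
        obtain ⟨a, haz, b, hbz, hab, hoa, hob⟩ := exists_primary_split x hx0 hcop
        have haN : a ∈ (N : Subgroup G) := (Subgroup.zpowers_le.mpr hx) haz
        have haP : a ∈ (P : Subgroup G) :=
          mem_sylow_of_orderOf_pow P (hn p hp P) ⟨_, hoa⟩
        have haD : a ∈ D := by
          have hmem : (⟨a, haP⟩ : (P : Subgroup G)) ∈
              ((N : Subgroup G) ⊓ (P : Subgroup G)).subgroupOf (P : Subgroup G) :=
            Subgroup.mem_subgroupOf.mpr ⟨haN, haP⟩
          exact ⟨⟨a, haP⟩, h' hmem, rfl⟩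
        have hbK : b ∈ K := by
          apply mem_sylK_of_not_dvd_orderOf hn hp
          rw [hob]
          exact Nat.not_dvd_ordCompl hp (orderOf_pos x).ne'
        rw [hab]
        exact Subgroup.mul_mem_sup haD hbK
      · right
        show E ≤ (N : Subgroup G)
        intro x hx
        obtain ⟨y, hy, hyx⟩ := hx
        have hyN : y ∈ ((N : Subgroup G) ⊓ (P : Subgroup G)).subgroupOf (P : Subgroup G) :=
          h' hy
        have hmem := (Subgroup.mem_subgroupOf.mp hyN).1
        have hyx' : (y : G) = x := hyx
        rwa [hyx'] at hmem
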